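/- arXiv:2404.16800 — 4 statements merged into one kernel-verified Lean document; each statement's English description precedes it below -/
import Mathlib

section
/- For α < 1/2 and a_n = Γ(n)Γ(α+1)/Γ(n+α), the sums v_n = ∑_{k=1}^n a_k^2 satisfy v_n / n^{1−2α} → Γ(α+1)^2 / (1 − 2α) as n → ∞. -/
open Filter Topology Asymptotics Finset

/-!
Euler's limit formula `n^s n! / (s(s+1)⋯(s+n)) → Γ(s)`, taken at `s = α + 1`, gives
`a_n n^α → Γ(α+1)` for every `α > -1`, so `a_k² ~ Γ(α+1)² k^{q-1}` with `q = 1 - 2α`.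
For `q > 0` the increments `(k+1)^q - k^q ~ q k^{q-1}` are positive and telescope to `n^q`;
summing the asymptotic equivalence against them (a weighted Cesàro argument) gives
`v_n ~ Γ(α+1)² n^q / q`.
-/

theorem Real.Gamma_add_nat_eq_mul_prod {s : ℝ} (hs : ∀ k : ℕ, s ≠ -k) (n : ℕ) :
    Real.Gamma (s + n) = Real.Gamma s * ∏ j ∈ range n, (s + j) := by
  induction n with
  | zero => simp
  | succ n ih =>
    have hsn : s + n ≠ 0 := fun h => hs n (by linarith)
    rw [Nat.cast_succ, ← add_assoc, Real.Gamma_add_one hsn, ih, prod_range_succ]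
    ring

theorem Asymptotics.IsEquivalent.sum_range {f g : ℕ → ℝ} (h : f ~[atTop] g) (hg : 0 ≤ g)
    (h'g : Tendsto (fun n => ∑ i ∈ range n, g i) atTop atTop) :
    (fun n => ∑ i ∈ range n, f i) ~[atTop] fun n => ∑ i ∈ range n, g i := by
  have h' := h.isLittleO.sum_range hg h'g
  simp only [Pi.sub_apply, sum_sub_distrib] at h'
  exact h'

theorem isEquivalent_rpow_add_one_sub_rpow {q : ℝ} (hq : q ≠ 0) :
    (fun i : ℕ => ((i : ℝ) + 1) ^ q - (i : ℝ) ^ q) ~[atTop]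
      fun i => q * ((i : ℝ) + 1) ^ (q - 1) := by
  have hderiv : HasDerivAt (fun x : ℝ => x ^ q) q 1 := by
    simpa using Real.hasDerivAt_rpow_const (x := 1) (p := q) (Or.inl one_ne_zero)
  have ht : Tendsto (fun i : ℕ => -((i : ℝ) + 1)⁻¹) atTop (𝓝[<] 0) := by
    refine tendsto_nhdsWithin_iff.mpr ⟨?_, Eventually.of_forall fun i => ?_⟩
    · simpa using (tendsto_one_div_add_atTop_nhds_zero_nat (𝕜 := ℝ)).neg
    · simp only [Set.mem_Iio, neg_lt_zero, inv_pos]; positivity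
  -- the ratio is the slope of `x ↦ x ^ q` between `1` and `i / (i + 1)`
  have hslope := (hderiv.tendsto_slope_zero_left.comp ht).div_const q
  rw [div_self hq] at hslope
  refine isEquivalent_of_tendsto_one (hslope.congr fun i => ?_)
  have hi : (0 : ℝ) < (i : ℝ) + 1 := by positivity
  have h1 : (1 : ℝ) + -((i : ℝ) + 1)⁻¹ = i / (i + 1) := by field_simp; ring
  simp only [Function.comp_apply, smul_eq_mul, Pi.div_apply, h1, Real.one_rpow,
    Real.div_rpow (Nat.cast_nonneg i) hi.le, Real.rpow_sub_one hi.ne']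
  field_simp
  ring

theorem Real.tendsto_Gamma_mul_Gamma_add_one_div_Gamma_add_mul_rpow {α : ℝ} (hα : -1 < α) :
    Tendsto (fun n : ℕ => Real.Gamma n * Real.Gamma (α + 1) / Real.Gamma ((n : ℝ) + α) *
      (n : ℝ) ^ α) atTop (𝓝 (Real.Gamma (α + 1))) := by
  have hcorr : Tendsto (fun n : ℕ => (1 + α / n) * (1 + (α + 1) / n)) atTop (𝓝 1) := by
    simpa using ((tendsto_const_div_atTop_nhds_zero_nat α).const_add 1).mul
      ((tendsto_const_div_atTop_nhds_zero_nat (α + 1)).const_add 1)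
  -- `GammaSeq (α + 1) n` is the ratio in question times `n² / ((n + α)(n + α + 1))`.
  have hlim := (Real.GammaSeq_tendsto_Gamma (α + 1)).mul hcorr
  rw [mul_one] at hlim
  refine hlim.congr' ?_
  filter_upwards [eventually_gt_atTop 0] with n hn
  have hn' : (0 : ℝ) < n := Nat.cast_pos.mpr hn
  have hnα : (0 : ℝ) < n + α := by linarith [(Nat.one_le_cast (α := ℝ)).mpr hn]
  have hΓpos : 0 < Real.Gamma (α + 1) := Real.Gamma_pos_of_pos (by linarith)
  have hΓnα : 0 < Real.Gamma (n + α) := Real.Gamma_pos_of_pos hnα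
  have hprod : ∏ j ∈ range (n + 1), (α + 1 + j) =
      (n + α + 1) * (n + α) * Real.Gamma (n + α) / Real.Gamma (α + 1) := by
    rw [eq_div_iff hΓpos.ne', mul_comm, ← Real.Gamma_add_nat_eq_mul_prod
      (fun k h => by linarith [(Nat.cast_nonneg k : (0:ℝ) ≤ k)]) (n + 1),
      show α + 1 + ((n + 1 : ℕ) : ℝ) = (n + α) + 1 + 1 by push_cast; ring,
      Real.Gamma_add_one (by linarith), Real.Gamma_add_one hnα.ne', mul_assoc]
  have hfact : (n.factorial : ℝ) = n * Real.Gamma n := by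
    rw [← Real.Gamma_nat_eq_factorial, Real.Gamma_add_one hn'.ne']
  rw [Real.GammaSeq, hfact, hprod, Real.rpow_add_one hn'.ne']
  field_simp
  ring

theorem Asymptotics.IsEquivalent.tendsto_sum_range_div_rpow {b : ℕ → ℝ} {c q : ℝ}
    (hc : 0 < c) (hq : 0 < q) (h : b ~[atTop] fun i => c * ((i : ℝ) + 1) ^ (q - 1)) :
    Tendsto (fun n => (∑ i ∈ range n, b i) / (n : ℝ) ^ q) atTop (𝓝 (c / q)) := by
  set w : ℕ → ℝ := fun i => c / q * (((i : ℝ) + 1) ^ q - (i : ℝ) ^ q)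
  have hw_sum (n : ℕ) : ∑ i ∈ range n, w i = c / q * (n : ℝ) ^ q := by
    have htelescope := sum_range_sub (fun i : ℕ => (i : ℝ) ^ q) n
    push_cast at htelescope
    rw [← mul_sum, htelescope, Real.zero_rpow hq.ne', sub_zero]
  have hw_nonneg : 0 ≤ w := fun i => mul_nonneg (by positivity)
    (sub_nonneg.mpr (Real.rpow_le_rpow (Nat.cast_nonneg i) (by linarith) hq.le))
  have hw_top : Tendsto (fun n => ∑ i ∈ range n, w i) atTop atTop := by
    simp only [hw_sum]
    exact ((tendsto_rpow_atTop hq).comp tendsto_natCast_atTop_atTop).const_mul_atTop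
      (by positivity)
  have hbw : b ~[atTop] w := by
    refine h.trans ?_
    have hscaled := ((IsEquivalent.refl (u := fun _ : ℕ => c / q)).mul
      (isEquivalent_rpow_add_one_sub_rpow hq.ne')).symm
    refine hscaled.congr_left (Eventually.of_forall fun i => ?_)
    simp only [Pi.mul_apply]
    field_simp
  have hsum := (hbw.sum_range hw_nonneg hw_top).div
    (IsEquivalent.refl (u := fun n : ℕ => (n : ℝ) ^ q))
  refine hsum.symm.tendsto_nhds (tendsto_const_nhds.congr' ?_)
  filter_upwards [eventually_gt_atTop 0] with n hn
  have hnq : (n : ℝ) ^ q ≠ 0 := (Real.rpow_pos_of_pos (Nat.cast_pos.mpr hn) q).ne'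
  simp only [Pi.div_apply, hw_sum]
  field_simp

/-- For `α < 1/2`, `v_n / n^{1−2α} → Γ(α+1)² / (1−2α)`. -/
theorem stmt_8 (α : ℝ) (hα : α ∈ Set.Ioo (-1 : ℝ) (1 / 2)) (a v : ℕ → ℝ)
    (ha : ∀ n, a n = Real.Gamma n * Real.Gamma (α + 1) / Real.Gamma ((n : ℝ) + α))
    (hv : ∀ n, v n = ∑ k ∈ Finset.Icc 1 n, a k ^ 2) :
    Tendsto (fun n : ℕ => v n / (n : ℝ) ^ ((1 : ℝ) - 2 * α)) atTop
      (nhds (Real.Gamma (α + 1) ^ 2 / (1 - 2 * α))) := by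
  obtain ⟨hα_gt, hα_lt⟩ := hα
  have hΓ : 0 < Real.Gamma (α + 1) := Real.Gamma_pos_of_pos (by linarith)
  have hlim : Tendsto (fun i : ℕ => a (i + 1) * ((i : ℝ) + 1) ^ α) atTop
      (𝓝 (Real.Gamma (α + 1))) := by
    refine ((Real.tendsto_Gamma_mul_Gamma_add_one_div_Gamma_add_mul_rpow hα_gt).comp
      (tendsto_add_atTop_nat 1)).congr fun i => ?_
    simp [ha]
  have hequiv : (fun i => a (i + 1) ^ 2) ~[atTop]
      fun i => Real.Gamma (α + 1) ^ 2 * ((i : ℝ) + 1) ^ ((1 - 2 * α) - 1) := by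
    have hprod := ((isEquivalent_const_iff_tendsto (pow_pos hΓ 2).ne').mpr (hlim.pow 2)).mul
      (IsEquivalent.refl (u := fun i : ℕ => ((i : ℝ) + 1) ^ ((1 - 2 * α) - 1)))
    refine hprod.congr_left (Eventually.of_forall fun i => ?_)
    have hi : (0 : ℝ) < i + 1 := by positivity
    simp only [Pi.mul_apply]
    rw [mul_pow, ← Real.rpow_natCast (_ ^ α), ← Real.rpow_mul hi.le, mul_assoc,
      ← Real.rpow_add hi, show α * (2 : ℕ) + (1 - 2 * α - 1) = 0 by push_cast; ring,
      Real.rpow_zero, mul_one]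
  refine (hequiv.tendsto_sum_range_div_rpow (by positivity) (by linarith)).congr fun n => ?_
  rw [hv, range_eq_Ico, sum_Ico_add' (fun k => a k ^ 2) 0 n 1]
  rfl
end

section
/- For α = 1/2 and a_n = Γ(n)Γ(3/2)/Γ(n+1/2), the sums v_n = ∑_{k=1}^n a_k^2 satisfy v_n / log n → π/4 as n → ∞. -/
/-!
By the functional equation of `Γ`, `a (n + 2) / a (n + 1) = (2n + 2) / (2n + 3)`, which is exactly
the ratio of consecutive Wallis products: `(2n + 1) a (n + 1)² = W n → π / 2`. Hence
`a n² ~ π / (4n)`, and summing against the harmonic series `H n ~ log n` gives `v n ~ (π / 4) log n`.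
-/

open Filter Finset Real Asymptotics Topology

theorem Finset.sum_Icc_one_eq_sum_range {M : Type*} [AddCommMonoid M] (f : ℕ → M) (n : ℕ) :
    ∑ k ∈ Icc 1 n, f k = ∑ k ∈ range n, f (k + 1) := by
  rw [range_eq_Ico, sum_Ico_add' f 0 n 1, zero_add]
  rfl

theorem Asymptotics.IsLittleO.tendsto_div_of_sub {α : Type*} {l : Filter α} {f g : α → ℝ} {c : ℝ}
    (h : (fun x => f x - c * g x) =o[l] g) (hg : ∀ᶠ x in l, g x ≠ 0) :
    Tendsto (fun x => f x / g x) l (𝓝 c) := by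
  have := h.tendsto_div_nhds_zero.add_const c
  rw [zero_add] at this
  refine this.congr' ?_
  filter_upwards [hg] with x hx
  rw [sub_div, mul_div_cancel_right₀ _ hx, sub_add_cancel]

theorem tendsto_log_natCast_atTop : Tendsto (fun n : ℕ => log n) atTop atTop :=
  tendsto_log_atTop.comp tendsto_natCast_atTop_atTop

theorem isEquivalent_harmonic_log :
    (fun n : ℕ => (harmonic n : ℝ)) ~[atTop] fun n => log n :=
  (tendsto_harmonic_sub_log.isBigO_one ℝ).trans_isLittleO
    (isLittleO_const_log_atTop.comp_tendsto tendsto_natCast_atTop_atTop)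

theorem isLittleO_sum_Icc_sub_mul_harmonic {b : ℕ → ℝ} {c : ℝ}
    (h : Tendsto (fun n : ℕ => n * b n) atTop (𝓝 c)) :
    (fun n => ∑ k ∈ Icc 1 n, b k - c * harmonic n) =o[atTop] fun n => (harmonic n : ℝ) := by
  set g : ℕ → ℝ := fun k => ((k : ℝ) + 1)⁻¹
  have hg : ∀ n, ∑ k ∈ range n, g k = harmonic n := fun n => by simp [g, harmonic]
  have hterm : (fun k => b (k + 1) - c * g k) =o[atTop] g := by
    have h₀ : Tendsto (fun k : ℕ => ((k : ℝ) + 1) * b (k + 1) - c) atTop (𝓝 0) := by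
      simpa using ((tendsto_add_atTop_iff_nat 1).2 h).sub_const c
    refine ((isBigO_refl g atTop).mul_isLittleO ((isLittleO_one_iff ℝ).2 h₀)).congr
      (fun k => ?_) (fun k => mul_one _)
    have hk : (k : ℝ) + 1 ≠ 0 := by positivity
    rw [mul_sub, ← mul_assoc, inv_mul_cancel₀ hk, one_mul, mul_comm]
  have hH : Tendsto (fun n => ∑ k ∈ range n, g k) atTop atTop := by
    simpa only [hg] using isEquivalent_harmonic_log.symm.tendsto_atTop tendsto_log_natCast_atTop
  refine (hterm.sum_range (fun k => by positivity) hH).congr (fun n => ?_) hg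
  rw [sum_sub_distrib, ← mul_sum, hg, sum_Icc_one_eq_sum_range]

theorem tendsto_sum_Icc_div_log_of_tendsto_mul {b : ℕ → ℝ} {c : ℝ}
    (h : Tendsto (fun n : ℕ => n * b n) atTop (𝓝 c)) :
    Tendsto (fun n : ℕ => (∑ k ∈ Icc 1 n, b k) / log n) atTop (𝓝 c) := by
  refine IsLittleO.tendsto_div_of_sub ?_ (tendsto_log_natCast_atTop.eventually_ne_atTop 0)
  have hH := isEquivalent_harmonic_log
  refine ((isLittleO_sum_Icc_sub_mul_harmonic h).trans_isBigO hH.isBigO).add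
    (hH.isLittleO.const_mul_left c) |>.congr_left fun n => ?_
  simp only [Pi.sub_apply]
  ring

theorem Real.Gamma_add_one_div_Gamma_add_add_one {x s : ℝ} (hx : x ≠ 0) (hxs : x + s ≠ 0) :
    Gamma (x + 1) / Gamma (x + s + 1) = x / (x + s) * (Gamma x / Gamma (x + s)) := by
  rw [Gamma_add_one hx, Gamma_add_one hxs, mul_div_mul_comm]

theorem Real.Wallis.W_eq_mul_sq_Gamma_div_Gamma (n : ℕ) :
    W n = (2 * n + 1) * (Gamma (3 / 2) * (Gamma (n + 1) / Gamma (n + 1 + 1 / 2))) ^ 2 := by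
  induction n with
  | zero =>
    have h : Gamma (3 / 2) ≠ 0 := (Gamma_pos_of_pos (by norm_num)).ne'
    norm_num [W, h]
  | succ n ih =>
    have hstep := Gamma_add_one_div_Gamma_add_add_one (x := n + 1) (s := 1 / 2)
      (by positivity) (by positivity)
    push_cast
    rw [add_right_comm _ 1 (1 / 2 : ℝ), hstep, mul_left_comm, mul_pow, W_succ, ih]
    field_simp
    ring

theorem tendsto_natCast_add_one_div_two_mul_add_one :
    Tendsto (fun n : ℕ => ((n : ℝ) + 1) / (2 * n + 1)) atTop (𝓝 (1 / 2)) := by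
  have := ((tendsto_add_atTop_iff_nat 1).2 (tendsto_natCast_div_add_atTop (-1 / 2 : ℝ))).const_mul
    (1 / 2)
  rw [mul_one] at this
  refine this.congr fun n => ?_
  rw [show ((n + 1 : ℕ) : ℝ) + -1 / 2 = (2 * n + 1) / 2 by push_cast; ring]
  push_cast
  field_simp

theorem tendsto_natCast_mul_sq_Gamma_div_Gamma :
    Tendsto (fun n : ℕ => (n : ℝ) * (Gamma n * Gamma (3 / 2) / Gamma (n + 1 / 2)) ^ 2) atTop
      (𝓝 (π / 4)) := by
  rw [← tendsto_add_atTop_iff_nat 1]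
  have := Wallis.tendsto_W_nhds_pi_div_two.mul tendsto_natCast_add_one_div_two_mul_add_one
  rw [show π / 2 * (1 / 2) = π / 4 by ring] at this
  refine this.congr fun n => ?_
  rw [Wallis.W_eq_mul_sq_Gamma_div_Gamma]
  push_cast
  field_simp

/-- For `α = 1/2`, `v_n / log n → π/4`. -/
theorem stmt_9 (a v : ℕ → ℝ)
    (ha : ∀ n, a n = Real.Gamma n * Real.Gamma (3 / 2) / Real.Gamma ((n : ℝ) + 1 / 2))
    (hv : ∀ n, v n = ∑ k ∈ Finset.Icc 1 n, a k ^ 2) :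
    Tendsto (fun n : ℕ => v n / Real.log n) atTop (nhds (Real.pi / 4)) := by
  simp only [hv]
  exact tendsto_sum_Icc_div_log_of_tendsto_mul
    (by simpa only [ha] using tendsto_natCast_mul_sq_Gamma_div_Gamma)
end

section
/- For α ∈ (0,1), with a_n = Γ(n)Γ(α+1)/Γ(n+α) and A_n = ∑_{k=1}^n a_k, there exist positive constants c, C such that c/n^{1−α} ≤ |A_n/(n a_n) − 1/(1−α)| ≤ C/n^{1−α} for all sufficiently large n (i.e., |A_n/(n a_n) − 1/(1−α)| ∼ n^{−(1−α)}). -/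
/-!
The sum telescopes, since `(1 - α) Γ(k) / Γ(k + α) = Γ(k + 1) / Γ(k + α) - Γ(k) / Γ(k - 1 + α)`,
so `A_n / (n a_n) - 1 / (1 - α) = -Γ(n + α) / ((1 - α) Γ(α) Γ(n + 1))` exactly. Log-convexity of `Γ`
gives Gautschi's bounds `(n - 1)^α Γ(n) ≤ Γ(n + α) ≤ n^α Γ(n)`, which pin `Γ(n + α) / Γ(n + 1)`
between `n^(α - 1) / 2` and `n^(α - 1)` once `n ≥ 2`.
-/

open Filter

namespace Real

lemma log_Gamma_add_one {y : ℝ} (hy : 0 < y) :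
    log (Gamma (y + 1)) = log (Gamma y) + log y := by
  rw [Gamma_add_one hy.ne', log_mul hy.ne' (Gamma_pos_of_pos hy).ne', add_comm]

lemma Gamma_nat_add_le_mul_rpow {n : ℕ} {x : ℝ} (hn : n ≠ 0) (hx₀ : 0 < x) (hx₁ : x ≤ 1) :
    Gamma (n + x) ≤ Gamma n * (n : ℝ) ^ x := by
  have hn' : (0 : ℝ) < n := by positivity
  have h := BohrMollerup.f_add_nat_le convexOn_log_Gamma (fun hy => log_Gamma_add_one hy) hn hx₀ hx₁
  rw [← exp_le_exp, Function.comp_apply, Function.comp_apply,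
    exp_log (Gamma_pos_of_pos (by positivity)), exp_add, exp_log (Gamma_pos_of_pos hn'),
    mul_comm x, ← rpow_def_of_pos hn'] at h
  exact h

lemma Gamma_nat_mul_rpow_le {n : ℕ} {x : ℝ} (hn : 2 ≤ n) (hx : 0 < x) :
    Gamma n * ((n : ℝ) - 1) ^ x ≤ Gamma (n + x) := by
  have hn' : (1 : ℝ) < n := by exact_mod_cast hn
  have h := BohrMollerup.f_add_nat_ge convexOn_log_Gamma (fun hy => log_Gamma_add_one hy) hn hx
  rw [← exp_le_exp, Function.comp_apply, Function.comp_apply,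
    exp_log (Gamma_pos_of_pos (by positivity)), exp_add, exp_log (Gamma_pos_of_pos (by positivity)),
    mul_comm x, ← rpow_def_of_pos (by linarith)] at h
  exact h

lemma one_sub_mul_sum_Gamma_div_Gamma_add {α : ℝ} (hα : 0 < α) (n : ℕ) :
    (1 - α) * ∑ k ∈ Finset.Icc 1 n, Gamma k / Gamma (k + α) =
      Gamma (n + 1) / Gamma (n + α) - 1 / Gamma α := by
  induction n with
  | zero => simp
  | succ n ih =>
    have hnα : (n : ℝ) + α ≠ 0 := by positivity
    have hΓ : Gamma (n + α) ≠ 0 := (Gamma_pos_of_pos (by positivity)).ne'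
    rw [Finset.sum_Icc_succ_top (by omega), mul_add, ih]
    push_cast
    rw [show (n : ℝ) + 1 + α = n + α + 1 by ring, Gamma_add_one hnα,
      Gamma_add_one (by positivity : (n : ℝ) + 1 ≠ 0)]
    field_simp
    ring

lemma Gamma_nat_add_mul_rpow_le_Gamma_succ {n : ℕ} {x : ℝ} (hn : n ≠ 0) (hx₀ : 0 < x)
    (hx₁ : x ≤ 1) : Gamma (n + x) * (n : ℝ) ^ (1 - x) ≤ Gamma (n + 1) := by
  have hn' : (0 : ℝ) < n := by positivity
  calc Gamma (n + x) * (n : ℝ) ^ (1 - x) ≤ Gamma n * (n : ℝ) ^ x * (n : ℝ) ^ (1 - x) := by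
        gcongr; exact Gamma_nat_add_le_mul_rpow hn hx₀ hx₁
    _ = Gamma (n + 1) := by
        rw [mul_assoc, ← rpow_add hn', add_sub_cancel, rpow_one, Gamma_add_one hn'.ne', mul_comm]

lemma Gamma_succ_le_two_mul_Gamma_nat_add_mul_rpow {n : ℕ} {x : ℝ} (hn : 2 ≤ n) (hx₀ : 0 < x)
    (hx₁ : x ≤ 1) : Gamma (n + 1) ≤ 2 * (Gamma (n + x) * (n : ℝ) ^ (1 - x)) := by
  have hn' : (2 : ℝ) ≤ n := by exact_mod_cast hn
  have h_half : (n : ℝ) ^ x / 2 ≤ ((n : ℝ) - 1) ^ x :=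
    calc (n : ℝ) ^ x / 2 ≤ (n : ℝ) ^ x / 2 ^ x := by
          gcongr; simpa using rpow_le_rpow_of_exponent_le one_le_two hx₁
      _ = ((n : ℝ) / 2) ^ x := (div_rpow (by positivity) zero_le_two x).symm
      _ ≤ ((n : ℝ) - 1) ^ x := by gcongr; linarith
  have h_split : (n : ℝ) = (n : ℝ) ^ x * (n : ℝ) ^ (1 - x) := by
    rw [← rpow_add (by positivity), add_sub_cancel, rpow_one]
  calc Gamma (n + 1) = 2 * (Gamma n * ((n : ℝ) ^ x / 2) * (n : ℝ) ^ (1 - x)) := by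
        rw [Gamma_add_one (by positivity)]; linear_combination Gamma n * h_split
    _ ≤ 2 * (Gamma n * ((n : ℝ) - 1) ^ x * (n : ℝ) ^ (1 - x)) := by
        have hΓn := Gamma_pos_of_pos (by positivity : (0 : ℝ) < n)
        gcongr
    _ ≤ 2 * (Gamma (n + x) * (n : ℝ) ^ (1 - x)) := by
        gcongr; exact Gamma_nat_mul_rpow_le hn hx₀

end Real

open Real in
lemma partialSum_div_nat_mul_sub_eq {α : ℝ} (hα₀ : 0 < α) (hα₁ : α ≠ 1) {a A : ℕ → ℝ}
    (ha : ∀ n, a n = Gamma n * Gamma (α + 1) / Gamma ((n : ℝ) + α))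
    (hA : ∀ n, A n = ∑ k ∈ Finset.Icc 1 n, a k) {n : ℕ} (hn : n ≠ 0) :
    A n / ((n : ℝ) * a n) - 1 / (1 - α) =
      -(Gamma (n + α) / ((1 - α) * Gamma α * Gamma (n + 1))) := by
  have h1α : 1 - α ≠ 0 := sub_ne_zero.mpr hα₁.symm
  have hAn : A n = Gamma (α + 1) * (Gamma (n + 1) / Gamma (n + α) - 1 / Gamma α) / (1 - α) := by
    rw [eq_div_iff h1α, ← one_sub_mul_sum_Gamma_div_Gamma_add hα₀, hA, Finset.mul_sum,
      Finset.mul_sum, Finset.sum_mul]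
    exact Finset.sum_congr rfl fun k _ => by rw [ha]; ring
  have hn' : (0 : ℝ) < n := by positivity
  have hΓα := Gamma_pos_of_pos hα₀
  have hΓnα := Gamma_pos_of_pos (by positivity : (0 : ℝ) < n + α)
  rw [hAn, ha n, Gamma_add_one hα₀.ne', Gamma_add_one hn'.ne']
  field_simp
  ring

/-- For `α ∈ (0,1)`, `|A_n/(n a_n) − 1/(1−α)| ∼ n^{−(1−α)}`: there are positive
constants `c, C` with `c/n^{1−α} ≤ |A_n/(n a_n) − 1/(1−α)| ≤ C/n^{1−α}` for large `n`. -/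
theorem stmt_12 (α : ℝ) (hα : α ∈ Set.Ioo (0 : ℝ) 1) (a A : ℕ → ℝ)
    (ha : ∀ n, a n = Real.Gamma n * Real.Gamma (α + 1) / Real.Gamma ((n : ℝ) + α))
    (hA : ∀ n, A n = ∑ k ∈ Finset.Icc 1 n, a k) :
    ∃ c C : ℝ, 0 < c ∧ 0 < C ∧
      ∀ᶠ n : ℕ in atTop,
        c / (n : ℝ) ^ ((1 : ℝ) - α) ≤ |A n / ((n : ℝ) * a n) - 1 / (1 - α)| ∧
          |A n / ((n : ℝ) * a n) - 1 / (1 - α)| ≤ C / (n : ℝ) ^ ((1 : ℝ) - α) := by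
  obtain ⟨hα₀, hα₁⟩ := hα
  have hD : 0 < (1 - α) * Real.Gamma α := mul_pos (by linarith) (Real.Gamma_pos_of_pos hα₀)
  refine ⟨1 / (2 * ((1 - α) * Real.Gamma α)), 1 / ((1 - α) * Real.Gamma α),
    by positivity, by positivity, ?_⟩
  filter_upwards [eventually_ge_atTop 2] with n hn
  have hn₀ : n ≠ 0 := by omega
  have hΓnα : 0 < Real.Gamma (n + α) := Real.Gamma_pos_of_pos (by positivity)
  have hΓn : 0 < Real.Gamma (n + 1) := Real.Gamma_pos_of_pos (by positivity)
  rw [partialSum_div_nat_mul_sub_eq hα₀ hα₁.ne ha hA hn₀, abs_neg, abs_of_pos (by positivity)]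
  constructor
  · field_simp
    linarith [Real.Gamma_succ_le_two_mul_Gamma_nat_add_mul_rpow hn hα₀ hα₁.le]
  · field_simp
    linarith [Real.Gamma_nat_add_mul_rpow_le_Gamma_succ hn₀ hα₀ hα₁.le]
end

section
/- For the minimal random walk with α = p − q < 1/2, S_n/n → q/(1−α) almost surely as n → ∞. -/
/-!
Write `e n = S n / n - q / (1 - α)` and `ξ (n + 1) = X (n + 1) - (q + α S n / n)` for the
martingale increment. Since `q + α c = c` for `c = q / (1 - α)`, the walk satisfies the
stochastic-approximation recursion
`e (n + 1) = (1 - (1 - α) / (n + 1)) e n + ξ (n + 1) / (n + 1)`.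
The noise `∑ ξ (n + 1) / (n + 1)` is a martingale with increments `O(1 / n)`, hence bounded in
`L²` and a.s. convergent. A recursion `e (n + 1) = (1 - b n) e n + d n` with `∑ b n = ∞` and
`∑ d n` convergent forces `e n → 0`: adding the tails of `∑ d n` to `e` leaves a recursion
with vanishing noise, and there the contraction factors `∏ (1 - b k) ≤ exp (-∑ b k)` tend
to zero.
-/

open MeasureTheory Filter Topology Finset

lemma le_mul_exp_neg_sum_range {w b : ℕ → ℝ} (hw0 : ∀ n, 0 ≤ w n)
    (hw : ∀ n, w (n + 1) ≤ (1 - b n) * w n) (n : ℕ) :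
    w n ≤ w 0 * Real.exp (-∑ k ∈ range n, b k) := by
  induction n with
  | zero => simp
  | succ n ih =>
    have := hw0 n
    calc w (n + 1) ≤ (1 - b n) * w n := hw n
      _ ≤ Real.exp (-b n) * w n := by gcongr; linarith [Real.add_one_le_exp (-b n)]
      _ ≤ Real.exp (-b n) * (w 0 * Real.exp (-∑ k ∈ range n, b k)) := by gcongr
      _ = w 0 * Real.exp (-∑ k ∈ range (n + 1), b k) := by
        rw [sum_range_succ, neg_add, Real.exp_add]; ring

lemma tendsto_zero_of_le_one_sub_mul {w b : ℕ → ℝ} (hw0 : ∀ n, 0 ≤ w n)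
    (hw : ∀ n, w (n + 1) ≤ (1 - b n) * w n)
    (hb : Tendsto (fun n => ∑ k ∈ range n, b k) atTop atTop) : Tendsto w atTop (𝓝 0) := by
  have h : Tendsto (fun n => w 0 * Real.exp (-∑ k ∈ range n, b k)) atTop (𝓝 0) := by
    simpa using (Real.tendsto_exp_neg_atTop_nhds_zero.comp hb).const_mul (w 0)
  exact squeeze_zero hw0 (le_mul_exp_neg_sum_range hw0 hw) h

lemma tendsto_zero_of_eq_one_sub_mul_add_mul {f b r : ℕ → ℝ}
    (hb : ∀ᶠ n in atTop, 0 ≤ b n ∧ b n ≤ 1) (hb_sum : ¬Summable b)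
    (hr : Tendsto r atTop (𝓝 0)) (hf : ∀ n, f (n + 1) = (1 - b n) * f n + b n * r n) :
    Tendsto f atTop (𝓝 0) := by
  rw [Metric.tendsto_atTop]
  intro ε hε
  obtain ⟨N, hN⟩ := eventually_atTop.mp
    (hb.and (hr.eventually (Metric.closedBall_mem_nhds 0 (half_pos hε))))
  -- Past `N`, the excess `(|f| - ε / 2)⁺` contracts by the factor `1 - b`.
  set w : ℕ → ℝ := fun k => max (|f (k + N)| - ε / 2) 0
  have hw : ∀ k, w (k + 1) ≤ (1 - b (k + N)) * w k := by
    intro k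
    obtain ⟨⟨hb0, hb1⟩, hrk⟩ := hN (k + N) (Nat.le_add_left N k)
    rw [Real.dist_0_eq_abs] at hrk
    have hstep : |f (k + 1 + N)| ≤ (1 - b (k + N)) * |f (k + N)| + b (k + N) * (ε / 2) := by
      rw [add_right_comm, hf]
      calc _ ≤ |(1 - b (k + N)) * f (k + N)| + |b (k + N) * r (k + N)| := abs_add_le _ _
        _ ≤ _ := by
          rw [abs_mul, abs_mul, abs_of_nonneg hb0, abs_of_nonneg (sub_nonneg.mpr hb1)]
          gcongr
    have hwk : |f (k + N)| - ε / 2 ≤ w k := le_max_left _ _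
    exact max_le (by nlinarith) (mul_nonneg (sub_nonneg.mpr hb1) (le_max_right _ _))
  have hbN : Tendsto (fun k => ∑ i ∈ range k, b (i + N)) atTop atTop :=
    (not_summable_iff_tendsto_nat_atTop_of_nonneg
      fun k => (hN (k + N) (Nat.le_add_left N k)).1.1).mp
      ((summable_nat_add_iff N).not.mpr hb_sum)
  obtain ⟨K, hK⟩ := Metric.tendsto_atTop.mp
    (tendsto_zero_of_le_one_sub_mul (w := w) (fun k => le_max_right _ _) hw hbN)
    (ε / 2) (half_pos hε)
  refine ⟨K + N, fun n hn => ?_⟩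
  obtain ⟨k, rfl⟩ : ∃ k, n = k + N := ⟨n - N, by omega⟩
  have hwk : |w k| < ε / 2 := by simpa using hK k (by omega)
  rw [Real.dist_0_eq_abs]
  linarith [le_abs_self (w k), le_max_left (|f (k + N)| - ε / 2) 0]

lemma tendsto_zero_of_eq_one_sub_mul_add {e b d : ℕ → ℝ} {L : ℝ}
    (hb : ∀ᶠ n in atTop, 0 ≤ b n ∧ b n ≤ 1) (hb_sum : ¬Summable b)
    (hd : Tendsto (fun n => ∑ k ∈ range n, d k) atTop (𝓝 L))
    (he : ∀ n, e (n + 1) = (1 - b n) * e n + d n) : Tendsto e atTop (𝓝 0) := by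
  -- `r n = ∑ k ≥ n, d k`, and `e + r` satisfies the recursion with noise `b n * r n`.
  set r : ℕ → ℝ := fun n => L - ∑ k ∈ range n, d k
  have hr : Tendsto r atTop (𝓝 0) := by simpa using (tendsto_const_nhds (x := L)).sub hd
  have hg : Tendsto (fun n => e n + r n) atTop (𝓝 0) :=
    tendsto_zero_of_eq_one_sub_mul_add_mul hb hb_sum hr fun n => by
      simp only [r, he, sum_range_succ]; ring
  simpa using hg.sub hr

lemma not_summable_div_natCast_add_two {a : ℝ} (ha : a ≠ 0) :
    ¬Summable fun k : ℕ => a / (k + 2 : ℕ) := by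
  simp_rw [div_eq_mul_one_div a, summable_mul_left_iff ha]
  exact (summable_nat_add_iff 2).not.mpr Real.not_summable_one_div_natCast

lemma summable_sq_div_natCast_add_two (a : ℝ) :
    Summable fun k : ℕ => (a / (k + 2 : ℕ)) ^ 2 := by
  simp_rw [div_pow, div_eq_mul_one_div (a ^ 2)]
  exact ((summable_nat_add_iff 2).mpr (Real.summable_one_div_nat_pow.mpr one_lt_two)).mul_left _

lemma eventually_div_natCast_add_two_mem_Icc {a : ℝ} (ha : 0 ≤ a) :
    ∀ᶠ k : ℕ in atTop, 0 ≤ a / (k + 2 : ℕ) ∧ a / (k + 2 : ℕ) ≤ 1 := by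
  filter_upwards [eventually_ge_atTop ⌈a⌉₊] with k hk
  refine ⟨by positivity, div_le_one_of_le₀ ?_ (by positivity)⟩
  calc a ≤ ⌈a⌉₊ := Nat.le_ceil a
    _ ≤ (k + 2 : ℕ) := by exact_mod_cast (by omega : ⌈a⌉₊ ≤ k + 2)

section Martingale

variable {Ω : Type*} {m0 : MeasurableSpace Ω} {μ : Measure Ω} [IsProbabilityMeasure μ]

lemma integral_mul_eq_zero_of_condExp_eq_zero {m : MeasurableSpace Ω} (hm : m ≤ m0)
    {f g : Ω → ℝ} (hf : StronglyMeasurable[m] f) (hfg : Integrable (f * g) μ)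
    (hg : Integrable g μ) (hg0 : μ[g | m] =ᵐ[μ] 0) : ∫ ω, f ω * g ω ∂μ = 0 := by
  calc ∫ ω, f ω * g ω ∂μ = ∫ ω, (μ[f * g | m]) ω ∂μ := (integral_condExp hm).symm
    _ = ∫ ω, (f * μ[g | m]) ω ∂μ :=
      integral_congr_ae (condExp_mul_of_stronglyMeasurable_left hf hfg hg)
    _ = 0 := by
      rw [integral_eq_zero_of_ae]
      filter_upwards [hg0] with ω hω
      simp [hω]

lemma eLpNorm_one_le_of_integral_sq_le {f : Ω → ℝ} {K : ℝ} (hf : Integrable f μ)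
    (hf2 : Integrable (fun ω => f ω ^ 2) μ) (hK : ∫ ω, f ω ^ 2 ∂μ ≤ K) :
    eLpNorm f 1 μ ≤ ENNReal.ofReal ((1 + K) / 2) := by
  rw [eLpNorm_one_eq_lintegral_enorm, ← ofReal_integral_norm_eq_lintegral_enorm hf]
  refine ENNReal.ofReal_le_ofReal ?_
  calc ∫ ω, ‖f ω‖ ∂μ ≤ ∫ ω, (1 + f ω ^ 2) / 2 ∂μ :=
        integral_mono hf.norm (((integrable_const 1).add hf2).div_const 2) fun ω => by
          nlinarith [sq_nonneg (|f ω| - 1), sq_abs (f ω), Real.norm_eq_abs (f ω)]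
    _ = (1 + ∫ ω, f ω ^ 2 ∂μ) / 2 := by
      rw [integral_div, integral_add (integrable_const 1) hf2, integral_const]; simp
    _ ≤ (1 + K) / 2 := by linarith

lemma integrable_of_abs_le {m : MeasurableSpace Ω} (hm : m ≤ m0) {f : Ω → ℝ} {C : ℝ}
    (hf : StronglyMeasurable[m] f) (hC : ∀ ω, |f ω| ≤ C) : Integrable f μ :=
  .of_bound (hf.mono hm).aestronglyMeasurable C (ae_of_all _ hC)

lemma integrable_sq_of_abs_le {m : MeasurableSpace Ω} (hm : m ≤ m0) {f : Ω → ℝ} {C : ℝ}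
    (hf : StronglyMeasurable[m] f) (hC : ∀ ω, |f ω| ≤ C) :
    Integrable (fun ω => f ω ^ 2) μ :=
  integrable_of_abs_le hm (hf.pow 2) fun ω => by
    rw [abs_pow]; exact pow_le_pow_left₀ (abs_nonneg _) (hC ω) 2

variable {ℱ : Filtration ℕ m0} {d : ℕ → Ω → ℝ} {c : ℕ → ℝ}

lemma stronglyMeasurable_sum_range (hd : ∀ n, StronglyMeasurable[ℱ (n + 1)] (d n)) (n : ℕ) :
    StronglyMeasurable[ℱ n] (∑ k ∈ range n, d k) :=
  Finset.stronglyMeasurable_sum _ fun k hk => (hd k).mono (ℱ.mono (mem_range.mp hk))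

lemma abs_sum_range_le (hbdd : ∀ n ω, |d n ω| ≤ c n) (n : ℕ) (ω : Ω) :
    |(∑ k ∈ range n, d k) ω| ≤ ∑ k ∈ range n, c k := by
  rw [Finset.sum_apply]
  exact (abs_sum_le_sum_abs _ _).trans (sum_le_sum fun k _ => hbdd k ω)

lemma martingale_sum_range (hd : ∀ n, StronglyMeasurable[ℱ (n + 1)] (d n))
    (hcond : ∀ n, μ[d n | ℱ n] =ᵐ[μ] 0) (hbdd : ∀ n ω, |d n ω| ≤ c n) :
    Martingale (fun n => ∑ k ∈ range n, d k) ℱ μ := by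
  have hint : ∀ n, Integrable (∑ k ∈ range n, d k) μ := fun n =>
    integrable_of_abs_le (ℱ.le n) (stronglyMeasurable_sum_range hd n) (abs_sum_range_le hbdd n)
  refine martingale_nat (stronglyMeasurable_sum_range hd) hint fun n => ?_
  have hdn : Integrable (d n) μ := integrable_of_abs_le (ℱ.le _) (hd n) (hbdd n)
  rw [sum_range_succ]
  filter_upwards [condExp_add (hint n) hdn (ℱ n), hcond n] with ω hadd hω
  rw [hadd, Pi.add_apply, hω, condExp_of_stronglyMeasurable (ℱ.le n)
    (stronglyMeasurable_sum_range hd n) (hint n)]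
  simp

lemma integral_sq_sum_range_le (hd : ∀ n, StronglyMeasurable[ℱ (n + 1)] (d n))
    (hcond : ∀ n, μ[d n | ℱ n] =ᵐ[μ] 0) (hbdd : ∀ n ω, |d n ω| ≤ c n) (n : ℕ) :
    ∫ ω, (∑ k ∈ range n, d k) ω ^ 2 ∂μ ≤ ∑ k ∈ range n, c k ^ 2 := by
  induction n with
  | zero => simp
  | succ n ih =>
    set M := ∑ k ∈ range n, d k
    have hMm := stronglyMeasurable_sum_range hd n
    have hMd : StronglyMeasurable[m0] (M * d n) :=
      (hMm.mono (ℱ.le n)).mul ((hd n).mono (ℱ.le _))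
    have hMb := abs_sum_range_le hbdd n
    have hMdi : Integrable (M * d n) μ := integrable_of_abs_le le_rfl hMd fun ω => by
      rw [Pi.mul_apply, abs_mul]
      exact mul_le_mul (hMb ω) (hbdd n ω) (abs_nonneg _) ((abs_nonneg _).trans (hMb ω))
    have hdm : StronglyMeasurable[m0] (d n) := (hd n).mono (ℱ.le _)
    have hM2 : Integrable (fun ω => M ω ^ 2) μ := integrable_sq_of_abs_le (ℱ.le n) hMm hMb
    have hd2 : Integrable (fun ω => d n ω ^ 2) μ := integrable_sq_of_abs_le le_rfl hdm (hbdd n)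
    have hcross : ∫ ω, M ω * d n ω ∂μ = 0 :=
      integral_mul_eq_zero_of_condExp_eq_zero (ℱ.le n) hMm hMdi
        (integrable_of_abs_le le_rfl hdm (hbdd n)) (hcond n)
    have hd2_le : ∫ ω, d n ω ^ 2 ∂μ ≤ c n ^ 2 := by
      calc ∫ ω, d n ω ^ 2 ∂μ ≤ ∫ _, c n ^ 2 ∂μ :=
            integral_mono hd2 (integrable_const _) fun ω => by
              rw [← sq_abs]; exact pow_le_pow_left₀ (abs_nonneg _) (hbdd n ω) 2
        _ = c n ^ 2 := by simp
    calc ∫ ω, (∑ k ∈ range (n + 1), d k) ω ^ 2 ∂μ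
        = ∫ ω, (M ω ^ 2 + 2 * (M ω * d n ω)) + d n ω ^ 2 ∂μ := by
          congr 1 with ω; rw [sum_range_succ, Pi.add_apply]; ring
      _ = ∫ ω, M ω ^ 2 ∂μ + 2 * ∫ ω, M ω * d n ω ∂μ + ∫ ω, d n ω ^ 2 ∂μ := by
          have hMdi' : Integrable (fun ω => 2 * (M ω * d n ω)) μ := hMdi.const_mul 2
          rw [integral_add (f := fun ω => M ω ^ 2 + 2 * (M ω * d n ω)) (hM2.add hMdi') hd2,
            integral_add hM2 hMdi', integral_const_mul]
      _ ≤ ∑ k ∈ range (n + 1), c k ^ 2 := by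
          rw [hcross, sum_range_succ]; linarith

lemma ae_exists_tendsto_sum_range (hd : ∀ n, StronglyMeasurable[ℱ (n + 1)] (d n))
    (hcond : ∀ n, μ[d n | ℱ n] =ᵐ[μ] 0) (hbdd : ∀ n ω, |d n ω| ≤ c n)
    (hc : Summable fun n => c n ^ 2) :
    ∀ᵐ ω ∂μ, ∃ L, Tendsto (fun n => ∑ k ∈ range n, d k ω) atTop (𝓝 L) := by
  have hmart := martingale_sum_range hd hcond hbdd
  have hL1 (n : ℕ) : eLpNorm (∑ k ∈ range n, d k) 1 μ
      ≤ ((1 + ∑' k, c k ^ 2) / 2).toNNReal := by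
    refine eLpNorm_one_le_of_integral_sq_le (hmart.integrable n)
      (integrable_sq_of_abs_le (ℱ.le n) (stronglyMeasurable_sum_range hd n)
        (abs_sum_range_le hbdd n))
      ((integral_sq_sum_range_le hd hcond hbdd n).trans
        (hc.sum_le_tsum _ fun k _ => sq_nonneg (c k)))
  filter_upwards [hmart.submartingale.exists_ae_tendsto_of_bdd hL1] with ω hω
  simpa only [Finset.sum_apply] using hω

end Martingale

section Walk

variable {Ω : Type*} {m0 : MeasurableSpace Ω} {μ : Measure Ω} [IsProbabilityMeasure μ]
  {F : Filtration ℕ m0} {X S : ℕ → Ω → ℝ} {q α : ℝ}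

/-- `X (n + 1) - E[X (n + 1) | F n]` for `n ≥ 1`; at `n = 0`, `S 0 / 0` is Lean's junk `0`. -/
noncomputable def walkNoise (X S : ℕ → Ω → ℝ) (q α : ℝ) (n : ℕ) (ω : Ω) : ℝ :=
  X (n + 1) ω - (q + α * S n ω / n)

lemma walk_nonneg_and_le (hX01 : ∀ n ω, X n ω = 0 ∨ X n ω = 1) (hS0 : ∀ ω, S 0 ω = 0)
    (hSrec : ∀ n ω, S (n + 1) ω = S n ω + X (n + 1) ω) (n : ℕ) (ω : Ω) :
    0 ≤ S n ω ∧ S n ω ≤ n := by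
  induction n with
  | zero => simp [hS0]
  | succ n ih =>
    rw [hSrec]
    push_cast
    rcases hX01 (n + 1) ω with h | h <;> rw [h] <;> constructor <;> linarith

lemma adapted_walk (hS0 : ∀ ω, S 0 ω = 0)
    (hSrec : ∀ n ω, S (n + 1) ω = S n ω + X (n + 1) ω)
    (hX : Adapted F X) : Adapted F S := by
  intro n
  induction n with
  | zero => rw [show S 0 = fun _ => 0 from funext hS0]; exact measurable_const
  | succ n ih =>
    rw [show S (n + 1) = fun ω => S n ω + X (n + 1) ω from funext (hSrec n)]
    exact (ih.mono (F.mono n.le_succ) le_rfl).add (hX (n + 1))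

lemma abs_walkNoise_le (hX01 : ∀ n ω, X n ω = 0 ∨ X n ω = 1) (hS0 : ∀ ω, S 0 ω = 0)
    (hSrec : ∀ n ω, S (n + 1) ω = S n ω + X (n + 1) ω) (n : ℕ) (ω : Ω) :
    |walkNoise X S q α n ω| ≤ 1 + |q| + |α| := by
  obtain ⟨hS_nonneg, hS_le⟩ := walk_nonneg_and_le hX01 hS0 hSrec n ω
  have hαS : |α * (S n ω / n)| ≤ |α| := by
    rw [abs_mul]
    refine mul_le_of_le_one_right (abs_nonneg α)
      (abs_le.mpr ⟨?_, div_le_one_of_le₀ hS_le n.cast_nonneg⟩)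
    linarith [div_nonneg hS_nonneg n.cast_nonneg]
  obtain ⟨h1, h2⟩ := abs_le.mp hαS
  rw [walkNoise, mul_div_assoc, abs_le]
  rcases hX01 (n + 1) ω with h | h <;> rw [h] <;> constructor <;>
    linarith [le_abs_self q, neg_abs_le q]

lemma measurable_walk_condMean (hS0 : ∀ ω, S 0 ω = 0)
    (hSrec : ∀ n ω, S (n + 1) ω = S n ω + X (n + 1) ω) (hX : Adapted F X) (n : ℕ) :
    Measurable[F n] fun ω => q + α * S n ω / n :=
  (((adapted_walk hS0 hSrec hX n).const_mul α).div_const _).const_add q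

lemma stronglyMeasurable_walkNoise (hS0 : ∀ ω, S 0 ω = 0)
    (hSrec : ∀ n ω, S (n + 1) ω = S n ω + X (n + 1) ω) (hX : Adapted F X) (n : ℕ) :
    StronglyMeasurable[F (n + 1)] (walkNoise X S q α n) :=
  ((hX (n + 1)).sub ((measurable_walk_condMean hS0 hSrec hX n).mono (F.mono n.le_succ)
    le_rfl)).stronglyMeasurable

lemma condExp_walkNoise_eq_zero (hX01 : ∀ n ω, X n ω = 0 ∨ X n ω = 1)
    (hS0 : ∀ ω, S 0 ω = 0)
    (hSrec : ∀ n ω, S (n + 1) ω = S n ω + X (n + 1) ω) (hX : Adapted F X)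
    (hcond : ∀ n, 1 ≤ n →
      μ[Set.indicator {ω' | X (n + 1) ω' = 1} (fun _ => (1 : ℝ)) | F n]
        =ᵐ[μ] fun ω => q + α * S n ω / n) {n : ℕ} (hn : 1 ≤ n) :
    μ[walkNoise X S q α n | F n] =ᵐ[μ] 0 := by
  have hind : {ω' | X (n + 1) ω' = 1}.indicator (fun _ => (1 : ℝ)) = X (n + 1) :=
    funext fun ω => by rcases hX01 (n + 1) ω with h | h <;> simp [h]
  have hXcond := hcond n hn
  rw [hind] at hXcond
  have hXint : Integrable (X (n + 1)) μ :=
    integrable_of_abs_le (C := 1) (F.le _) (hX (n + 1)).stronglyMeasurable fun ω => by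
      rcases hX01 (n + 1) ω with h | h <;> simp [h]
  have hmean_int : Integrable (fun ω => q + α * S n ω / n) μ := integrable_condExp.congr hXcond
  have hnoise : walkNoise X S q α n = X (n + 1) - fun ω => q + α * S n ω / n := rfl
  filter_upwards [condExp_sub hXint hmean_int (F n), hXcond] with ω hsub hω
  rw [hnoise, hsub, Pi.sub_apply, hω, condExp_of_stronglyMeasurable (F.le n)
    (measurable_walk_condMean hS0 hSrec hX n).stronglyMeasurable hmean_int]
  simp

lemma walk_div_sub_succ_eq (hSrec : ∀ n ω, S (n + 1) ω = S n ω + X (n + 1) ω)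
    (hα : 1 - α ≠ 0)
    {n : ℕ} (hn : n ≠ 0) (ω : Ω) :
    S (n + 1) ω / (n + 1 : ℕ) - q / (1 - α)
      = (1 - (1 - α) / (n + 1 : ℕ)) * (S n ω / n - q / (1 - α))
        + ((n + 1 : ℕ) : ℝ)⁻¹ * walkNoise X S q α n ω := by
  rw [walkNoise, hSrec]
  push_cast
  field_simp
  ring

lemma ae_exists_tendsto_sum_walkNoise (hX01 : ∀ n ω, X n ω = 0 ∨ X n ω = 1)
    (hS0 : ∀ ω, S 0 ω = 0) (hSrec : ∀ n ω, S (n + 1) ω = S n ω + X (n + 1) ω)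
    (hX : Adapted F X)
    (hcond : ∀ n, 1 ≤ n →
      μ[Set.indicator {ω' | X (n + 1) ω' = 1} (fun _ => (1 : ℝ)) | F n]
        =ᵐ[μ] fun ω => q + α * S n ω / n) :
    ∀ᵐ ω ∂μ, ∃ L, Tendsto
      (fun n => ∑ k ∈ range n, ((k + 2 : ℕ) : ℝ)⁻¹ * walkNoise X S q α (k + 1) ω)
      atTop (𝓝 L) := by
  -- `hcond` starts at `n = 1`, so the increments are indexed from there, along `F (· + 1)`.
  let G : Filtration ℕ m0 :=
    ⟨fun n => F (n + 1), fun _ _ h => F.mono (Nat.succ_le_succ h), fun n => F.le (n + 1)⟩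
  let d : ℕ → Ω → ℝ := fun k => ((k + 2 : ℕ) : ℝ)⁻¹ • walkNoise X S q α (k + 1)
  refine ae_exists_tendsto_sum_range (ℱ := G) (d := d)
    (c := fun k => (1 + |q| + |α|) / (k + 2 : ℕ))
    (fun k => (stronglyMeasurable_walkNoise hS0 hSrec hX (k + 1)).const_smul _)
    (fun k => (condExp_smul _ _ _).trans ?_) (fun k ω => ?_) (summable_sq_div_natCast_add_two _)
  · filter_upwards [condExp_walkNoise_eq_zero hX01 hS0 hSrec hX hcond (Nat.le_add_left 1 k)]
      with ω hω
    exact mul_eq_zero_of_right _ hω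
  · rw [show d k ω = ((k + 2 : ℕ) : ℝ)⁻¹ * walkNoise X S q α (k + 1) ω from rfl, abs_mul,
      abs_inv, Nat.abs_cast, div_eq_inv_mul]
    exact mul_le_mul_of_nonneg_left (abs_walkNoise_le hX01 hS0 hSrec _ ω) (by positivity)

end Walk

theorem stmt_13_general {Ω : Type*} {m0 : MeasurableSpace Ω} (μ : Measure Ω) [IsProbabilityMeasure μ]
    (F : Filtration ℕ m0) (X S : ℕ → Ω → ℝ) (q α : ℝ)
    (hα2 : α < 1 / 2)
    (hX01 : ∀ n ω, X n ω = 0 ∨ X n ω = 1)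
    (hS0 : ∀ ω, S 0 ω = 0)
    (hSrec : ∀ n ω, S (n + 1) ω = S n ω + X (n + 1) ω)
    (hXadapted : Adapted F X)
    (hcond : ∀ n, 1 ≤ n →
      μ[Set.indicator {ω' | X (n + 1) ω' = 1} (fun _ => (1 : ℝ)) | F n]
        =ᵐ[μ] fun ω => q + α * S n ω / n) :
    ∀ᵐ ω ∂μ, Tendsto (fun n : ℕ => S n ω / n) atTop (nhds (q / (1 - α))) := by
  have hα1 : 0 < 1 - α := by linarith
  filter_upwards [ae_exists_tendsto_sum_walkNoise hX01 hS0 hSrec hXadapted hcond]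
    with ω ⟨L, hL⟩
  have he : Tendsto (fun k => S (k + 1) ω / (k + 1 : ℕ) - q / (1 - α)) atTop (𝓝 0) :=
    tendsto_zero_of_eq_one_sub_mul_add (eventually_div_natCast_add_two_mem_Icc hα1.le)
      (not_summable_div_natCast_add_two hα1.ne') hL
      fun k => walk_div_sub_succ_eq hSrec hα1.ne' k.succ_ne_zero ω
  exact (tendsto_add_atTop_iff_nat 1).mp (tendsto_sub_nhds_zero_iff.mp he)

/-- For the minimal random walk with `α = p − q < 1/2`, `S_n/n → q/(1−α)` a.s. -/
theorem stmt_13 {Ω : Type*} {m0 : MeasurableSpace Ω} (μ : Measure Ω) [IsProbabilityMeasure μ]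
    (F : Filtration ℕ m0) (X S : ℕ → Ω → ℝ) (p q α : ℝ)
    (hp : p ∈ Set.Icc (0 : ℝ) 1) (hq : q ∈ Set.Ioc (0 : ℝ) 1) (hα : α = p - q)
    (hα2 : α < 1 / 2)
    (hX01 : ∀ n ω, X n ω = 0 ∨ X n ω = 1)
    (hS0 : ∀ ω, S 0 ω = 0)
    (hSrec : ∀ n ω, S (n + 1) ω = S n ω + X (n + 1) ω)
    (hXadapted : Adapted F X)
    (hcond : ∀ n, 1 ≤ n →
      μ[Set.indicator {ω' | X (n + 1) ω' = 1} (fun _ => (1 : ℝ)) | F n]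
        =ᵐ[μ] fun ω => q + α * S n ω / n) :
    ∀ᵐ ω ∂μ, Tendsto (fun n : ℕ => S n ω / n) atTop (nhds (q / (1 - α))) :=
  stmt_13_general μ F X S q α hα2 hX01 hS0 hSrec hXadapted hcond
end
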